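/- arXiv:2007.00237 — 7 statements merged into one kernel-verified Lean document; each statement's English description precedes it below -/
import Mathlib

section
/- (Theorem 1, unbiased estimator for decomposable losses) Let l* : {0,1} × ℝ → ℝ decompose as l*(y,ŷ) = l*₊(ŷ) if y = 1 and l*(y,ŷ) = l*₋(ŷ) if y = 0. Define l₊(ŷ) := p⁻¹ (l*₊(ŷ) + (p−1) l*₋(ŷ)) and l(y,ŷ) := l₊(ŷ) if y = 1, l*₋(ŷ) if y = 0. Then for every fixed prediction ŷ ∈ ℝ, E[l*(Y*, ŷ)] = E[l(Y, ŷ)]. -/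
/-!
Both expectations are affine in the probability of the positive label:
`E[l*(Y*, ŷ)] = l*₋ + (l*₊ - l*₋) P(Y* = 1)` and `E[l(Y, ŷ)] = l*₋ + (l₊ - l*₋) P(Y = 1)`.
Without false positives `{Y = 1}` is `{Y = 1, Y* = 1}` up to a null set, so
`P(Y = 1) = p P(Y* = 1)`, while `l₊ - l*₋ = p⁻¹ (l*₊ - l*₋)`.
-/

open MeasureTheory

theorem integral_ite_eq_add_smul {Ω E : Type*} [MeasurableSpace Ω] [NormedAddCommGroup E]
    [NormedSpace ℝ E] [CompleteSpace E] (P : Measure Ω) [IsProbabilityMeasure P] {q : Ω → Prop}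
    [DecidablePred q] (hq : MeasurableSet {ω | q ω}) (a b : E) :
    ∫ ω, (if q ω then a else b) ∂P = b + P.real {ω | q ω} • (a - b) := by
  change ∫ ω, {ω | q ω}.piecewise (fun _ ↦ a) (fun _ ↦ b) ω ∂P = _
  rw [integral_piecewise hq integrableOn_const integrableOn_const, setIntegral_const,
    setIntegral_const, probReal_compl_eq_one_sub hq, sub_smul, one_smul, smul_sub]
  abel

theorem measureReal_label_eq_mul {Ω : Type*} [MeasurableSpace Ω] (P : Measure Ω)
    [IsFiniteMeasure P] {Y Ystar : Ω → ℝ} (hYs : ∀ ω, Ystar ω = 0 ∨ Ystar ω = 1) {p : ℝ}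
    (hp : 0 ≤ p) (hnofp : P {ω | Y ω = 1 ∧ Ystar ω = 0} = 0)
    (hprop : P {ω | Y ω = 1 ∧ Ystar ω = 1} = ENNReal.ofReal p * P {ω | Ystar ω = 1}) :
    P.real {ω | Y ω = 1} = p * P.real {ω | Ystar ω = 1} := by
  have hnull : P ({ω | Y ω = 1} ∩ {ω | Ystar ω = 1}ᶜ) = 0 := by
    refine measure_mono_null ?_ hnofp
    exact fun ω hω ↦ ⟨hω.1, (hYs ω).resolve_right hω.2⟩
  have hsame : P {ω | Y ω = 1 ∧ Ystar ω = 1} = P {ω | Y ω = 1} := by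
    rw [← measure_sdiff_null' hnull, sdiff_compl]
    rfl
  rw [measureReal_def, ← hsame, hprop, ENNReal.toReal_mul, ENNReal.toReal_ofReal hp,
    measureReal_def]

theorem unbiased_estimator_decomposable_loss_general
    {Ω : Type*} [MeasurableSpace Ω] (P : Measure Ω) [IsProbabilityMeasure P]
    (Y Ystar : Ω → ℝ)
    (hYs : ∀ ω, Ystar ω = 0 ∨ Ystar ω = 1)
    (hmY : Measurable Y) (hmYs : Measurable Ystar)
    (p : ℝ) (hp0 : 0 < p)
    (hnofp : P {ω | Y ω = 1 ∧ Ystar ω = 0} = 0)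
    (hprop : P {ω | Y ω = 1 ∧ Ystar ω = 1} = ENNReal.ofReal p * P {ω | Ystar ω = 1})
    (lp lm : ℝ → ℝ) (yhat : ℝ) :
    ∫ ω, (if Ystar ω = 1 then lp yhat else lm yhat) ∂P
      = ∫ ω, (if Y ω = 1 then p⁻¹ * (lp yhat + (p - 1) * lm yhat) else lm yhat) ∂P := by
  have hlabel := measureReal_label_eq_mul P hYs hp0.le hnofp hprop
  rw [integral_ite_eq_add_smul P (q := (Ystar · = 1)) (hmYs (measurableSet_singleton 1)),
    integral_ite_eq_add_smul P (q := (Y · = 1)) (hmY (measurableSet_singleton 1)), hlabel,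
    smul_eq_mul, smul_eq_mul]
  field_simp
  ring

/-- Theorem 1: unbiased estimator for losses that decompose over the binary label.
With `l*(y,ŷ) = l*₊(ŷ)` for `y = 1` and `l*₋(ŷ)` for `y = 0`, and the reweighted loss
`l(1,ŷ) = p⁻¹ (l*₊(ŷ) + (p−1) l*₋(ŷ))`, `l(0,ŷ) = l*₋(ŷ)`, we have
`E[l*(Y*, ŷ)] = E[l(Y, ŷ)]` for every fixed prediction `ŷ`. -/
theorem unbiased_estimator_decomposable_loss
    {Ω : Type*} [MeasurableSpace Ω] (P : Measure Ω) [IsProbabilityMeasure P]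
    (Y Ystar : Ω → ℝ)
    (hY : ∀ ω, Y ω = 0 ∨ Y ω = 1) (hYs : ∀ ω, Ystar ω = 0 ∨ Ystar ω = 1)
    (hmY : Measurable Y) (hmYs : Measurable Ystar)
    (p : ℝ) (hp0 : 0 < p) (hp1 : p ≤ 1)
    (hnofp : P {ω | Y ω = 1 ∧ Ystar ω = 0} = 0)
    (hpos : 0 < P {ω | Ystar ω = 1})
    (hprop : P {ω | Y ω = 1 ∧ Ystar ω = 1} = ENNReal.ofReal p * P {ω | Ystar ω = 1})
    (lp lm : ℝ → ℝ) (yhat : ℝ) :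
    ∫ ω, (if Ystar ω = 1 then lp yhat else lm yhat) ∂P
      = ∫ ω, (if Y ω = 1 then p⁻¹ * (lp yhat + (p - 1) * lm yhat) else lm yhat) ∂P :=
  unbiased_estimator_decomposable_loss_general P Y Ystar hYs hmY hmYs p hp0 hnofp hprop lp lm yhat
end

section
/- (Corollary, multi-label case) In a multi-label setting with N labels, suppose for each label i the pair (Yᵢ, Yᵢ*) of {0,1}-valued random variables satisfies the propensity model with propensity pᵢ ∈ (0,1], i.e. P(Yᵢ=1, Yᵢ*=0) = 0, P(Yᵢ*=1) > 0 and P(Yᵢ=1 | Yᵢ*=1) = pᵢ. Let L*(y, ŷ) = Σᵢ₌₁ᴺ lᵢ*(yᵢ, ŷᵢ) where each lᵢ* decomposes as lᵢ*(1,ŷ) = lᵢ*₊(ŷ), lᵢ*(0,ŷ) = lᵢ*₋(ŷ), and let lᵢ(1,ŷ) := pᵢ⁻¹ (lᵢ*₊(ŷ) + (pᵢ−1) lᵢ*₋(ŷ)), lᵢ(0,ŷ) := lᵢ*₋(ŷ). Then with L(y, ŷ) := Σᵢ₌₁ᴺ lᵢ(yᵢ, ŷᵢ), for every fixed prediction vector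 ŷ ∈ ℝᴺ, E[L*(Y*, ŷ)] = E[L(Y, ŷ)]. -/
/-! Label by label, both losses take one constant value on an event and another off it, so
their expectations are affine in the probability of that event. Since the observed positives
are, up to a null set, true positives observed with probability `p`, we get
`P(Y = 1) = p · P(Y* = 1)`, and the weight `p⁻¹` in the reweighted loss cancels this factor. -/

open MeasureTheory

section

variable {Ω : Type*} [MeasurableSpace Ω] {P : Measure Ω} {q r : Ω → Prop} [DecidablePred q]

lemma integrable_ite_const [IsFiniteMeasure P] (hq : MeasurableSet {ω | q ω}) (a b : ℝ) :
    Integrable (fun ω => if q ω then a else b) P :=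
  Integrable.piecewise (s := {ω | q ω}) (f := fun _ => a) (g := fun _ => b) hq
    (integrableOn_const (measure_ne_top _ _)) (integrableOn_const (measure_ne_top _ _))

lemma integral_ite_const [IsProbabilityMeasure P] (hq : MeasurableSet {ω | q ω}) (a b : ℝ) :
    ∫ ω, (if q ω then a else b) ∂P = b + (a - b) * P.real {ω | q ω} := by
  have hpiece := integral_piecewise (f := fun _ => a) (g := fun _ => b) (μ := P) hq
    (integrableOn_const (measure_ne_top _ _)) (integrableOn_const (measure_ne_top _ _))
  simp only [Set.piecewise, Set.mem_ofPred_eq] at hpiece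
  rw [hpiece, setIntegral_const, setIntegral_const, probReal_compl_eq_one_sub hq, smul_eq_mul,
    smul_eq_mul]
  ring

/-- `q` is the event of an observed positive, `r` that of a true positive. -/
lemma integral_ite_const_eq_of_propensity [IsProbabilityMeasure P] [DecidablePred r]
    (hq : MeasurableSet {ω | q ω}) (hr : MeasurableSet {ω | r ω}) {p : ℝ} (hp : 0 < p)
    (hqr : P {ω | q ω ∧ ¬ r ω} = 0)
    (hprop : P {ω | q ω ∧ r ω} = ENNReal.ofReal p * P {ω | r ω}) (a b : ℝ) :
    ∫ ω, (if r ω then a else b) ∂P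
      = ∫ ω, (if q ω then p⁻¹ * (a + (p - 1) * b) else b) ∂P := by
  have hreal : P.real {ω | q ω} = p * P.real {ω | r ω} := by
    have hsdiff : P ({ω | q ω} \ {ω | r ω}) = 0 := hqr
    have hinter : P ({ω | q ω} ∩ {ω | r ω}) = ENNReal.ofReal p * P {ω | r ω} := hprop
    rw [measureReal_def, ← measure_inter_conull' hsdiff, hinter, ENNReal.toReal_mul,
      ENNReal.toReal_ofReal hp.le, measureReal_def]
  rw [integral_ite_const hr, integral_ite_const hq, hreal]
  field_simp
  ring

end

theorem unbiased_estimator_multilabel_general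
    {Ω : Type*} [MeasurableSpace Ω] (P : Measure Ω) [IsProbabilityMeasure P]
    (N : ℕ) (Y Ystar : Fin N → Ω → ℝ)
    (hYs : ∀ i ω, Ystar i ω = 0 ∨ Ystar i ω = 1)
    (hmY : ∀ i, Measurable (Y i)) (hmYs : ∀ i, Measurable (Ystar i))
    (p : Fin N → ℝ) (hp0 : ∀ i, 0 < p i)
    (hnofp : ∀ i, P {ω | Y i ω = 1 ∧ Ystar i ω = 0} = 0)
    (hprop : ∀ i, P {ω | Y i ω = 1 ∧ Ystar i ω = 1}
        = ENNReal.ofReal (p i) * P {ω | Ystar i ω = 1})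
    (lp lm : Fin N → ℝ → ℝ) (yhat : Fin N → ℝ) :
    ∫ ω, (∑ i, if Ystar i ω = 1 then lp i (yhat i) else lm i (yhat i)) ∂P
      = ∫ ω, (∑ i, if Y i ω = 1
            then (p i)⁻¹ * (lp i (yhat i) + (p i - 1) * lm i (yhat i))
            else lm i (yhat i)) ∂P := by
  have hmeas (X : Ω → ℝ) (hX : Measurable X) : MeasurableSet {ω | X ω = 1} :=
    hX (measurableSet_singleton 1)
  rw [integral_finsetSum _ fun i _ => integrable_ite_const (hmeas _ (hmYs i)) _ _,
    integral_finsetSum _ fun i _ => integrable_ite_const (hmeas _ (hmY i)) _ _]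
  refine Finset.sum_congr rfl fun i _ => ?_
  have hfalse_pos : {ω | Y i ω = 1 ∧ Ystar i ω ≠ 1} = {ω | Y i ω = 1 ∧ Ystar i ω = 0} := by
    ext ω
    rcases hYs i ω with h | h <;> simp [h]
  exact integral_ite_const_eq_of_propensity (hmeas _ (hmY i)) (hmeas _ (hmYs i)) (hp0 i)
    (hfalse_pos ▸ hnofp i) (hprop i) _ _

/-- Corollary (multi-label case): if each label pair `(Yᵢ, Yᵢ*)` satisfies the propensity
model with propensity `pᵢ`, then the sum over labels of the per-label reweighted losses is
an unbiased estimate of the sum of the true per-label losses: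
`E[Σᵢ lᵢ*(Yᵢ*, ŷᵢ)] = E[Σᵢ lᵢ(Yᵢ, ŷᵢ)]`. -/
theorem unbiased_estimator_multilabel
    {Ω : Type*} [MeasurableSpace Ω] (P : Measure Ω) [IsProbabilityMeasure P]
    (N : ℕ) (Y Ystar : Fin N → Ω → ℝ)
    (hY : ∀ i ω, Y i ω = 0 ∨ Y i ω = 1) (hYs : ∀ i ω, Ystar i ω = 0 ∨ Ystar i ω = 1)
    (hmY : ∀ i, Measurable (Y i)) (hmYs : ∀ i, Measurable (Ystar i))
    (p : Fin N → ℝ) (hp0 : ∀ i, 0 < p i) (hp1 : ∀ i, p i ≤ 1)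
    (hnofp : ∀ i, P {ω | Y i ω = 1 ∧ Ystar i ω = 0} = 0)
    (hpos : ∀ i, 0 < P {ω | Ystar i ω = 1})
    (hprop : ∀ i, P {ω | Y i ω = 1 ∧ Ystar i ω = 1}
        = ENNReal.ofReal (p i) * P {ω | Ystar i ω = 1})
    (lp lm : Fin N → ℝ → ℝ) (yhat : Fin N → ℝ) :
    ∫ ω, (∑ i, if Ystar i ω = 1 then lp i (yhat i) else lm i (yhat i)) ∂P
      = ∫ ω, (∑ i, if Y i ω = 1
            then (p i)⁻¹ * (lp i (yhat i) + (p i - 1) * lm i (yhat i))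
            else lm i (yhat i)) ∂P :=
  unbiased_estimator_multilabel_general P N Y Ystar hYs hmY hmYs p hp0 hnofp hprop lp lm yhat
end

section
/- (Unbiased squared error) For every fixed ŷ ∈ ℝ, the expected squared error with respect to the true label equals the expectation of the propensity-reweighted loss: E[(Y* − ŷ)²] = E[ Y (1 − 2ŷ)/p + ŷ² ]. -/
/-!
Since `Y*` takes values in `{0, 1}`, `(Y* - ŷ)² = Y* (1 - 2ŷ) + ŷ²`, so both sides are affine in the
integral of a `{0,1}`-valued variable, i.e. in the probability that it equals `1`. Because false
positives are null, `P(Y = 1) = P(Y = 1, Y* = 1) = p P(Y* = 1)`, and dividing by `p` matches the two.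
-/

open MeasureTheory

lemma sub_sq_of_eq_zero_or_eq_one {y : ℝ} (hy : y = 0 ∨ y = 1) (c : ℝ) :
    (y - c) ^ 2 = y * (1 - 2 * c) + c ^ 2 := by
  rcases hy with rfl | rfl <;> ring

lemma eq_indicator_one_of_forall_eq_zero_or_eq_one {Ω : Type*} {f : Ω → ℝ}
    (hf : ∀ ω, f ω = 0 ∨ f ω = 1) :
    f = {ω | f ω = 1}.indicator 1 := by
  funext ω
  rcases hf ω with h | h <;> simp [h]

section

variable {Ω : Type*} [MeasurableSpace Ω]

lemma integral_mul_add_const_of_forall_eq_zero_or_eq_one (μ : Measure Ω) [IsProbabilityMeasure μ]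
    {f : Ω → ℝ} (hf : ∀ ω, f ω = 0 ∨ f ω = 1) (hm : Measurable f) (a b : ℝ) :
    ∫ ω, (f ω * a + b) ∂μ = μ.real {ω | f ω = 1} * a + b := by
  set s := {ω | f ω = 1}
  have hs : MeasurableSet s := hm (measurableSet_singleton 1)
  have hfs : f = s.indicator 1 := eq_indicator_one_of_forall_eq_zero_or_eq_one hf
  have hint : Integrable f μ := hfs ▸ (integrable_const 1).indicator hs
  rw [integral_add (hint.mul_const a) (integrable_const b), integral_mul_const, integral_const,
    probReal_univ, one_smul, hfs, integral_indicator_one hs]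

lemma measure_and_eq_one_of_measure_and_eq_zero (μ : Measure Ω) {f g : Ω → ℝ}
    (hf : ∀ ω, f ω = 0 ∨ f ω = 1) (hnull : μ {ω | g ω = 1 ∧ f ω = 0} = 0) :
    μ {ω | g ω = 1 ∧ f ω = 1} = μ {ω | g ω = 1} := by
  have hsplit : {ω | g ω = 1 ∧ f ω = 1} = {ω | g ω = 1} \ {ω | g ω = 1 ∧ f ω = 0} := by
    ext ω
    rcases hf ω with h | h <;> simp [h]
  rw [hsplit, measure_sdiff_null hnull]

end

theorem unbiased_squared_error_general
    {Ω : Type*} [MeasurableSpace Ω] (P : Measure Ω) [IsProbabilityMeasure P]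
    (Y Ystar : Ω → ℝ)
    (hY : ∀ ω, Y ω = 0 ∨ Y ω = 1) (hYs : ∀ ω, Ystar ω = 0 ∨ Ystar ω = 1)
    (hmY : Measurable Y) (hmYs : Measurable Ystar)
    (p : ℝ) (hp0 : 0 < p)
    (hnofp : P {ω | Y ω = 1 ∧ Ystar ω = 0} = 0)
    (hprop : P {ω | Y ω = 1 ∧ Ystar ω = 1} = ENNReal.ofReal p * P {ω | Ystar ω = 1})
    (yhat : ℝ) :
    ∫ ω, (Ystar ω - yhat) ^ 2 ∂P
      = ∫ ω, (Y ω * (1 - 2 * yhat) / p + yhat ^ 2) ∂P := by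
  have hprobY : P.real {ω | Y ω = 1} = p * P.real {ω | Ystar ω = 1} := by
    rw [measureReal_def, ← measure_and_eq_one_of_measure_and_eq_zero P hYs hnofp, hprop,
      ENNReal.toReal_mul, ENNReal.toReal_ofReal hp0.le, measureReal_def]
  simp_rw [sub_sq_of_eq_zero_or_eq_one (hYs _), mul_div_assoc]
  rw [integral_mul_add_const_of_forall_eq_zero_or_eq_one P hYs hmYs,
    integral_mul_add_const_of_forall_eq_zero_or_eq_one P hY hmY, hprobY]
  field_simp

/-- Unbiased squared error: `E[(Y* − ŷ)²] = E[Y (1 − 2ŷ)/p + ŷ²]`. -/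
theorem unbiased_squared_error
    {Ω : Type*} [MeasurableSpace Ω] (P : Measure Ω) [IsProbabilityMeasure P]
    (Y Ystar : Ω → ℝ)
    (hY : ∀ ω, Y ω = 0 ∨ Y ω = 1) (hYs : ∀ ω, Ystar ω = 0 ∨ Ystar ω = 1)
    (hmY : Measurable Y) (hmYs : Measurable Ystar)
    (p : ℝ) (hp0 : 0 < p) (hp1 : p ≤ 1)
    (hnofp : P {ω | Y ω = 1 ∧ Ystar ω = 0} = 0)
    (hpos : 0 < P {ω | Ystar ω = 1})
    (hprop : P {ω | Y ω = 1 ∧ Ystar ω = 1} = ENNReal.ofReal p * P {ω | Ystar ω = 1})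
    (yhat : ℝ) :
    ∫ ω, (Ystar ω - yhat) ^ 2 ∂P
      = ∫ ω, (Y ω * (1 - 2 * yhat) / p + yhat ^ 2) ∂P :=
  unbiased_squared_error_general P Y Ystar hY hYs hmY hmYs p hp0 hnofp hprop yhat
end

section
/- (Non-convexity of the unbiased hinge estimate) For every p with 0 < p < 1, the function ẑ ↦ p⁻¹ ([1 − ẑ]₊ + (p − 1)[1 + ẑ]₊) from ℝ to ℝ is not convex. -/
/-!
The estimate is piecewise affine: on `(-∞, -1]` it equals `p⁻¹ (1 - ẑ)`, with slope `-p⁻¹`,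
and on `[-1, 1]` it equals `1 + (1 - 2 p⁻¹) ẑ`, with slope `1 - 2 p⁻¹`. For `0 < p < 1` we have
`p⁻¹ > 1`, so the slope drops at the kink `ẑ = -1`, contradicting the monotonicity of the
slopes of a convex function.
-/

open Set

noncomputable def unbiasedHinge (p z : ℝ) : ℝ :=
  p⁻¹ * (max (1 - z) 0 + (p - 1) * max (1 + z) 0)

lemma unbiasedHinge_of_le_neg_one (p : ℝ) {z : ℝ} (hz : z ≤ -1) :
    unbiasedHinge p z = p⁻¹ * (1 - z) := by
  rw [unbiasedHinge, max_eq_left (by linarith), max_eq_right (by linarith)]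
  ring

lemma unbiasedHinge_of_mem_Icc {p z : ℝ} (hp : p ≠ 0) (hz : z ∈ Icc (-1) 1) :
    unbiasedHinge p z = 1 + (1 - 2 * p⁻¹) * z := by
  rw [unbiasedHinge, max_eq_left (by linarith [hz.2]), max_eq_left (by linarith [hz.1])]
  field_simp
  ring

/-- Non-convexity of the unbiased hinge estimate: for `0 < p < 1`, the function
`ẑ ↦ p⁻¹ ([1 − ẑ]₊ + (p − 1)[1 + ẑ]₊)` is not convex on ℝ. -/
theorem unbiased_hinge_positive_part_not_convex
    (p : ℝ) (hp0 : 0 < p) (hp1 : p < 1) :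
    ¬ ConvexOn ℝ Set.univ
        (fun zhat : ℝ => p⁻¹ * (max (1 - zhat) 0 + (p - 1) * max (1 + zhat) 0)) := by
  intro h
  have hslope := h.slope_mono_adjacent (mem_univ (-2)) (mem_univ 0)
    (by norm_num : (-2 : ℝ) < -1) (by norm_num : (-1 : ℝ) < 0)
  change (unbiasedHinge p (-1) - unbiasedHinge p (-2)) / (-1 - -2)
    ≤ (unbiasedHinge p 0 - unbiasedHinge p (-1)) / (0 - -1) at hslope
  rw [unbiasedHinge_of_le_neg_one p (by norm_num : (-2 : ℝ) ≤ -1),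
    unbiasedHinge_of_le_neg_one p le_rfl,
    unbiasedHinge_of_mem_Icc hp0.ne' (by norm_num : (0 : ℝ) ∈ Icc (-1) 1)] at hslope
  have hinv : 1 < p⁻¹ := one_lt_inv₀ hp0 |>.mpr hp1
  linarith
end

section
/- (Unbiased 0-1 loss) Write Z := 2Y − 1 and Z* := 2Y* − 1. Let the true 0-1 loss be L*(z*, ẑ) := 1 if (z* = 1 and ẑ < 0) or (z* = −1 and ẑ ≥ 0), and 0 otherwise, and let the reweighted loss be L(z, ẑ) := (1/p)·1{ẑ < 0} + (1 − 1/p)·1{ẑ ≥ 0} if z = 1, and 1{ẑ ≥ 0} if z = −1. Then for every fixed ẑ ∈ ℝ, E[L*(Z*, ẑ)] = E[L(Z, ẑ)]. -/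
/-!
Both sides are affine in the probability of a positive label. With `q = P(Y* = 1)`, the left
side is `q·1{ẑ<0} + (1 − q)·1{ẑ≥0}`, and the right side is the same kind of expression in
`P(Y = 1)` with weights `1/p` and `1 − 1/p`. Since only true positives are ever labelled,
`P(Y = 1) = P(Y = 1, Y* = 1) = p q`, and the weight `1/p` exactly cancels the propensity.
-/

open MeasureTheory

theorem integral_ite_eq {Ω : Type*} [MeasurableSpace Ω]
    (P : Measure Ω) [IsProbabilityMeasure P] {q : Ω → Prop} [DecidablePred q]
    (hq : MeasurableSet {ω | q ω}) (a b : ℝ) :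
    ∫ ω, (if q ω then a else b) ∂P = a * P.real {ω | q ω} + b * (1 - P.real {ω | q ω}) := by
  have h := integral_piecewise (μ := P) (f := fun _ => a) (g := fun _ => b) hq
    integrableOn_const integrableOn_const
  simp only [Set.piecewise, Set.mem_ofPred_eq] at h
  rw [h, setIntegral_const, setIntegral_const, measureReal_compl hq, probReal_univ,
    smul_eq_mul, smul_eq_mul, mul_comm a, mul_comm b]

theorem measureReal_eq_mul_of_propensity {Ω : Type*} [MeasurableSpace Ω] {μ : Measure Ω}
    {Y Ystar : Ω → ℝ} (hYs : ∀ ω, Ystar ω = 0 ∨ Ystar ω = 1) {p : ℝ} (hp : 0 ≤ p)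
    (hnofp : μ {ω | Y ω = 1 ∧ Ystar ω = 0} = 0)
    (hprop : μ {ω | Y ω = 1 ∧ Ystar ω = 1} = ENNReal.ofReal p * μ {ω | Ystar ω = 1}) :
    μ.real {ω | Y ω = 1} = p * μ.real {ω | Ystar ω = 1} := by
  have hnull : μ ({ω | Y ω = 1} \ {ω | Ystar ω = 1}) = 0 :=
    measure_mono_null (fun ω hω => show Y ω = 1 ∧ Ystar ω = 0 from
      ⟨hω.1, (hYs ω).resolve_right hω.2⟩) hnofp
  rw [measureReal_def, ← measure_inter_conull' hnull, ← Set.ofPred_and, hprop,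
    ENNReal.toReal_mul, ENNReal.toReal_ofReal hp, measureReal_def]

theorem two_mul_sub_one_eq_one_iff {y : ℝ} : 2 * y - 1 = 1 ↔ y = 1 := by
  constructor <;> intro h <;> linarith

theorem ite_two_mul_sub_one_of_binary {y : ℝ} (hy : y = 0 ∨ y = 1) (c d : Prop)
    [Decidable c] [Decidable d] :
    (if (2 * y - 1 = 1 ∧ c) ∨ (2 * y - 1 = -1 ∧ d) then (1 : ℝ) else 0)
      = if y = 1 then (if c then 1 else 0) else (if d then 1 else 0) := by
  rcases hy with rfl | rfl <;> norm_num

theorem unbiased_zero_one_loss_general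
    {Ω : Type*} [MeasurableSpace Ω] (P : Measure Ω) [IsProbabilityMeasure P]
    (Y Ystar : Ω → ℝ)
    (hYs : ∀ ω, Ystar ω = 0 ∨ Ystar ω = 1)
    (hmY : Measurable Y) (hmYs : Measurable Ystar)
    (p : ℝ) (hp0 : 0 < p)
    (hnofp : P {ω | Y ω = 1 ∧ Ystar ω = 0} = 0)
    (hprop : P {ω | Y ω = 1 ∧ Ystar ω = 1} = ENNReal.ofReal p * P {ω | Ystar ω = 1})
    (zhat : ℝ) :
    ∫ ω, (if (2 * Ystar ω - 1 = 1 ∧ zhat < 0) ∨ (2 * Ystar ω - 1 = -1 ∧ 0 ≤ zhat)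
          then (1 : ℝ) else 0) ∂P
      = ∫ ω, (if 2 * Y ω - 1 = 1
              then (if zhat < 0 then 1 / p else 1 - 1 / p)
              else (if 0 ≤ zhat then (1 : ℝ) else 0)) ∂P := by
  simp_rw [fun ω => ite_two_mul_sub_one_of_binary (hYs ω) (zhat < 0) (0 ≤ zhat),
    two_mul_sub_one_eq_one_iff]
  rw [integral_ite_eq P (measurableSet_eq_fun hmYs measurable_const),
    integral_ite_eq P (measurableSet_eq_fun hmY measurable_const),
    measureReal_eq_mul_of_propensity hYs hp0.le hnofp hprop]
  rcases lt_or_ge zhat 0 with hz | hz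
  · simp only [hz, hz.not_ge, if_true, if_false]
    field_simp
    ring
  · simp only [hz, hz.not_gt, if_true, if_false]
    field_simp
    ring

/-- Unbiased 0-1 loss: with `Z = 2Y − 1`, `Z* = 2Y* − 1`, the true 0-1 loss
`L*(z*, ẑ) = 1` iff (`z* = 1` and `ẑ < 0`) or (`z* = −1` and `ẑ ≥ 0`), and the reweighted
loss `L(1, ẑ) = (1/p)·1{ẑ<0} + (1 − 1/p)·1{ẑ≥0}`, `L(−1, ẑ) = 1{ẑ≥0}`, we have
`E[L*(Z*, ẑ)] = E[L(Z, ẑ)]` for every fixed `ẑ`. -/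
theorem unbiased_zero_one_loss
    {Ω : Type*} [MeasurableSpace Ω] (P : Measure Ω) [IsProbabilityMeasure P]
    (Y Ystar : Ω → ℝ)
    (hY : ∀ ω, Y ω = 0 ∨ Y ω = 1) (hYs : ∀ ω, Ystar ω = 0 ∨ Ystar ω = 1)
    (hmY : Measurable Y) (hmYs : Measurable Ystar)
    (p : ℝ) (hp0 : 0 < p) (hp1 : p ≤ 1)
    (hnofp : P {ω | Y ω = 1 ∧ Ystar ω = 0} = 0)
    (hpos : 0 < P {ω | Ystar ω = 1})
    (hprop : P {ω | Y ω = 1 ∧ Ystar ω = 1} = ENNReal.ofReal p * P {ω | Ystar ω = 1})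
    (zhat : ℝ) :
    ∫ ω, (if (2 * Ystar ω - 1 = 1 ∧ zhat < 0) ∨ (2 * Ystar ω - 1 = -1 ∧ 0 ≤ zhat)
          then (1 : ℝ) else 0) ∂P
      = ∫ ω, (if 2 * Y ω - 1 = 1
              then (if zhat < 0 then 1 / p else 1 - 1 / p)
              else (if 0 ≤ zhat then (1 : ℝ) else 0)) ∂P :=
  unbiased_zero_one_loss_general P Y Ystar hYs hmY hmYs p hp0 hnofp hprop zhat
end

section
/- (Reweighted squared hinge loss as a convex upper bound on the shifted unbiased 0-1 loss) For 0 < p ≤ 1, let the shifted reweighted 0-1 loss be l̃(z, ẑ) := (2/p − 1)·1{ẑ < 0} if z = 1 and 1{ẑ ≥ 0} if z = −1, and let L_cv(z, ẑ) := ((z(1 − p) + 1)/p)·([1 − z ẑ]₊)² where [t]₊ := max(t, 0). Then for each z ∈ {−1, 1}, the function ẑ ↦ L_cv(z, ẑ) is convex on ℝ and satisfies L_cv(z, ẑ) ≥ l̃(z, ẑ) for all ẑ ∈ ℝ. -/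
/-! The hinge `max (1 - z ẑ) 0` is convex and nonnegative, so its square is convex. Wherever the
shifted 0-1 loss is nonzero we have `z ẑ ≤ 0`, so the hinge is at least `1`, and the weight
`(z(1-p)+1)/p` equals the loss value there: `1` for `z = -1` and `2/p - 1` for `z = 1`. -/

open Set

lemma convexOn_sq_hinge (z : ℝ) : ConvexOn ℝ univ fun x : ℝ => max (1 - z * x) 0 ^ 2 := by
  have affine : ConvexOn ℝ univ fun x : ℝ => 1 - z * x :=
    ⟨convex_univ, fun x _ y _ a b _ _ hab => by simp only [smul_eq_mul]; nlinarith⟩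
  exact (affine.sup (convexOn_const 0 convex_univ)).pow (fun _ _ => le_max_right _ _) 2

lemma le_mul_sq_hinge_of_mul_nonpos {a c z x : ℝ} (ha : 0 ≤ a) (hac : a ≤ c)
    (hzx : z * x ≤ 0) : a ≤ c * max (1 - z * x) 0 ^ 2 :=
  calc a ≤ c * 1 := by rwa [mul_one]
    _ ≤ c * max (1 - z * x) 0 ^ 2 :=
      mul_le_mul_of_nonneg_left (one_le_pow₀ (le_max_of_le_left (by linarith))) (ha.trans hac)

/-- Reweighted squared hinge loss as a convex upper bound on the shifted unbiased 0-1 loss.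
For each `z ∈ {−1, 1}`, `ẑ ↦ L_cv(z, ẑ) = ((z(1−p)+1)/p)·([1 − z ẑ]₊)²` is convex on ℝ and
dominates the shifted reweighted 0-1 loss `l̃(z, ẑ)`. -/
theorem reweighted_squared_hinge_convex_upper_bound
    (p : ℝ) (hp0 : 0 < p) (hp1 : p ≤ 1) :
    ∀ z ∈ ({-1, 1} : Set ℝ),
      ConvexOn ℝ Set.univ
          (fun zhat : ℝ => (z * (1 - p) + 1) / p * (max (1 - z * zhat) 0) ^ 2) ∧
      ∀ zhat : ℝ,
        (if z = 1 then (if zhat < 0 then 2 / p - 1 else (0 : ℝ))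
         else (if 0 ≤ zhat then (1 : ℝ) else 0))
          ≤ (z * (1 - p) + 1) / p * (max (1 - z * zhat) 0) ^ 2 := by
  intro z hz
  have hcoef : 0 ≤ (z * (1 - p) + 1) / p := by
    rcases hz with rfl | rfl <;> exact div_nonneg (by linarith) hp0.le
  refine ⟨(convexOn_sq_hinge z).smul hcoef, fun x => ?_⟩
  rcases hz with rfl | rfl
  · have hcoef_eq : (-1 * (1 - p) + 1) / p = 1 := by field_simp; ring
    rw [hcoef_eq, if_neg (by norm_num)]
    split_ifs with hx
    · exact le_mul_sq_hinge_of_mul_nonpos zero_le_one le_rfl (by linarith)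
    · positivity
  · have hcoef_eq : (1 * (1 - p) + 1) / p = 2 / p - 1 := by field_simp; ring
    rw [hcoef_eq] at hcoef ⊢
    rw [if_pos rfl]
    split_ifs with hx
    · exact le_mul_sq_hinge_of_mul_nonpos hcoef le_rfl (by linarith)
    · positivity
end

section
/- (Unbiased binary cross-entropy) For every fixed ŷ with 0 < ŷ < 1, the expected binary cross-entropy with respect to the true label equals the expectation of the propensity-reweighted loss: E[ −Y* log ŷ − (1 − Y*) log(1 − ŷ) ] = E[ −(Y/p) log ŷ − (1 − Y/p) log(1 − ŷ) ]. -/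
open MeasureTheory

/-! The loss is affine in the label, so by linearity its expectation is the same affine
function of the label's expectation, and it suffices that `E[Y / p] = E[Y*]`. Since
`Y ≤ Y*` almost surely, `E[Y] = P(Y = 1, Y* = 1) = p · P(Y* = 1) = p · E[Y*]`. -/

section ZeroOneValued

variable {Ω : Type*} {Z : Ω → ℝ}

lemma eq_indicator_one_of_zero_or_one (hZ : ∀ ω, Z ω = 0 ∨ Z ω = 1) :
    Z = {ω | Z ω = 1}.indicator 1 := by
  funext ω
  rcases hZ ω with h | h <;> simp [Set.indicator, h]

lemma integrable_of_zero_or_one [MeasurableSpace Ω] (μ : Measure Ω) [IsFiniteMeasure μ]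
    (hZ : ∀ ω, Z ω = 0 ∨ Z ω = 1) (hmZ : Measurable Z) : Integrable Z μ := by
  rw [eq_indicator_one_of_zero_or_one hZ]
  exact (integrable_const 1).indicator (hmZ (measurableSet_singleton 1))

lemma integral_eq_measureReal_of_zero_or_one [MeasurableSpace Ω] (μ : Measure Ω)
    (hZ : ∀ ω, Z ω = 0 ∨ Z ω = 1) (hmZ : Measurable Z) : ∫ ω, Z ω ∂μ = μ.real {ω | Z ω = 1} := by
  conv_lhs => rw [eq_indicator_one_of_zero_or_one hZ]
  exact integral_indicator_one (hmZ (measurableSet_singleton 1))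

end ZeroOneValued

lemma integral_neg_mul_sub_one_sub_mul {Ω : Type*} [MeasurableSpace Ω] (P : Measure Ω)
    [IsProbabilityMeasure P] {Z : Ω → ℝ} (hZ : Integrable Z P) (a b : ℝ) :
    ∫ ω, (-(Z ω) * a - (1 - Z ω) * b) ∂P = -(∫ ω, Z ω ∂P) * a - (1 - ∫ ω, Z ω ∂P) * b := by
  have haffine : ∀ t : ℝ, -t * a - (1 - t) * b = t * (b - a) - b := fun t => by ring
  simp_rw [haffine]
  rw [integral_sub (hZ.mul_const _) (integrable_const b), integral_mul_const, integral_const]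
  simp

lemma measure_setOf_and_eq_one_eq_measure {Ω : Type*} [MeasurableSpace Ω]
    (μ : Measure Ω) {Y Ystar : Ω → ℝ} (hYs : ∀ ω, Ystar ω = 0 ∨ Ystar ω = 1)
    (hnofp : μ {ω | Y ω = 1 ∧ Ystar ω = 0} = 0) :
    μ {ω | Y ω = 1 ∧ Ystar ω = 1} = μ {ω | Y ω = 1} := by
  refine measure_eq_measure_of_null_sdiff (fun ω hω => hω.1) (measure_mono_null ?_ hnofp)
  rintro ω ⟨hY, hnot⟩
  exact ⟨hY, (hYs ω).resolve_right fun h => hnot ⟨hY, h⟩⟩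

theorem unbiased_binary_cross_entropy_general
    {Ω : Type*} [MeasurableSpace Ω] (P : Measure Ω) [IsProbabilityMeasure P]
    (Y Ystar : Ω → ℝ)
    (hY : ∀ ω, Y ω = 0 ∨ Y ω = 1) (hYs : ∀ ω, Ystar ω = 0 ∨ Ystar ω = 1)
    (hmY : Measurable Y) (hmYs : Measurable Ystar)
    (p : ℝ) (hp0 : 0 < p)
    (hnofp : P {ω | Y ω = 1 ∧ Ystar ω = 0} = 0)
    (hprop : P {ω | Y ω = 1 ∧ Ystar ω = 1} = ENNReal.ofReal p * P {ω | Ystar ω = 1})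
    (yhat : ℝ) :
    ∫ ω, (-(Ystar ω) * Real.log yhat - (1 - Ystar ω) * Real.log (1 - yhat)) ∂P
      = ∫ ω, (-(Y ω / p) * Real.log yhat - (1 - Y ω / p) * Real.log (1 - yhat)) ∂P := by
  have hEY : ∫ ω, Y ω ∂P = p * ∫ ω, Ystar ω ∂P := by
    rw [integral_eq_measureReal_of_zero_or_one P hY hmY,
      integral_eq_measureReal_of_zero_or_one P hYs hmYs, measureReal_def, measureReal_def,
      ← measure_setOf_and_eq_one_eq_measure P hYs hnofp, hprop,
      ENNReal.toReal_mul, ENNReal.toReal_ofReal hp0.le]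
  have hEYp : ∫ ω, Y ω / p ∂P = ∫ ω, Ystar ω ∂P := by
    rw [integral_div, hEY, mul_div_cancel_left₀ _ hp0.ne']
  rw [integral_neg_mul_sub_one_sub_mul P (integrable_of_zero_or_one P hYs hmYs),
    integral_neg_mul_sub_one_sub_mul P ((integrable_of_zero_or_one P hY hmY).div_const p), hEYp]

/-- Unbiased binary cross-entropy: for `0 < ŷ < 1`,
`E[−Y* log ŷ − (1 − Y*) log(1 − ŷ)] = E[−(Y/p) log ŷ − (1 − Y/p) log(1 − ŷ)]`. -/
theorem unbiased_binary_cross_entropy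
    {Ω : Type*} [MeasurableSpace Ω] (P : Measure Ω) [IsProbabilityMeasure P]
    (Y Ystar : Ω → ℝ)
    (hY : ∀ ω, Y ω = 0 ∨ Y ω = 1) (hYs : ∀ ω, Ystar ω = 0 ∨ Ystar ω = 1)
    (hmY : Measurable Y) (hmYs : Measurable Ystar)
    (p : ℝ) (hp0 : 0 < p) (hp1 : p ≤ 1)
    (hnofp : P {ω | Y ω = 1 ∧ Ystar ω = 0} = 0)
    (hpos : 0 < P {ω | Ystar ω = 1})
    (hprop : P {ω | Y ω = 1 ∧ Ystar ω = 1} = ENNReal.ofReal p * P {ω | Ystar ω = 1})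
    (yhat : ℝ) (hy0 : 0 < yhat) (hy1 : yhat < 1) :
    ∫ ω, (-(Ystar ω) * Real.log yhat - (1 - Ystar ω) * Real.log (1 - yhat)) ∂P
      = ∫ ω, (-(Y ω / p) * Real.log yhat - (1 - Y ω / p) * Real.log (1 - yhat)) ∂P :=
  unbiased_binary_cross_entropy_general P Y Ystar hY hYs hmY hmYs p hp0 hnofp hprop yhat
end
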